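/- Let (U,Θ,ρ) be a probability space, N ∈ ℕ, Σ a symmetric positive definite N×N real matrix, and δ ∈ ℝ^N. Let M > 0 be a constant and let G_ε : U → ℝ^N (ε ∈ (0,1]), G^L : U → ℝ^N (L ∈ ℕ) and G_0 : U → ℝ^N be measurable maps, all bounded in absolute value by M on U, such that G_ε(z) → G_0(z) as ε → 0 and G^L(z) → G_0(z) as L → ∞, for every z ∈ U. Define Gibbs measures μ_ε and ν_L with densities proportional to exp(−Φ_ε) and exp(−Φ^L) with respect to ρ, where Φ_ε(z) = (1/2)⟨Σ^{-1}(δ − G_ε(z)), δ − G_ε(z)⟩ and Φ^L(z) = (1/2)⟨Σ^{-1}(δ − G^L(z)), δ − G^L(z)⟩. Then for any sequences ε_n → 0 and L_n → ∞, d_Hell(μ_{ε_n}, ν_{L_n}) → 0 as n → ∞. -/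

import Mathlib

open MeasureTheory Real Filter Matrix

/-- Euclidean norm on `ℝ^N`. -/
noncomputable def euclNorm {N : ℕ} (v : Fin N → ℝ) : ℝ := Real.sqrt (v ⬝ᵥ v)

/-- Least-squares potential `Φ(z) = ½ ⟨Σ⁻¹(δ - G z), δ - G z⟩`. -/
noncomputable def potential {U : Type*} {N : ℕ} (S : Matrix (Fin N) (Fin N) ℝ)
    (δ : Fin N → ℝ) (G : U → Fin N → ℝ) (z : U) : ℝ :=
  1 / 2 * ((S⁻¹).mulVec (δ - G z) ⬝ᵥ (δ - G z))

/-- Hellinger distance between two measures, absolutely continuous with respect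
to `ρ`, given by their densities `f, g`. -/
noncomputable def hellingerDist {U : Type*} [MeasurableSpace U] (ρ : Measure U)
    (f g : U → ℝ) : ℝ :=
  Real.sqrt (1 / 2 * ∫ z, (Real.sqrt (f z) - Real.sqrt (g z)) ^ 2 ∂ρ)

/-- Gibbs density `exp(-Φ)/Z` with `Z = ∫ exp(-Φ) dρ`. -/
noncomputable def gibbsDensity {U : Type*} [MeasurableSpace U] (ρ : Measure U)
    (Φ : U → ℝ) (z : U) : ℝ :=
  Real.exp (-Φ z) / ∫ w, Real.exp (-Φ w) ∂ρ

/-! The potentials `Φ_ε`, `Φ^L` are bounded uniformly by a constant `C`, since the forward maps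
are, and they converge pointwise to the same limit `Φ_0`, by continuity of the quadratic misfit.
Hence the normalising constants are bounded below by `exp (-C)` and converge by dominated
convergence, the Gibbs densities are bounded by `exp (2 C)` and converge pointwise to the same
limit density, and the Hellinger integral tends to `0` by dominated convergence once more. -/

open Topology

lemma abs_apply_le_euclNorm {N : ℕ} (v : Fin N → ℝ) (i : Fin N) : |v i| ≤ euclNorm v := by
  rw [euclNorm, ← Real.sqrt_sq_eq_abs, sq]
  exact Real.sqrt_le_sqrt <|
    Finset.single_le_sum (f := fun j => v j * v j) (fun j _ => mul_self_nonneg _)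
      (Finset.mem_univ i)

lemma abs_mulVec_dotProduct_le {N : ℕ} (A : Matrix (Fin N) (Fin N) ℝ) {v : Fin N → ℝ} {B : ℝ}
    (hv : ∀ i, |v i| ≤ B) :
    |A *ᵥ v ⬝ᵥ v| ≤ (∑ i, ∑ j, |A i j|) * B ^ 2 := by
  have hAv : ∀ i, |(A *ᵥ v) i| ≤ (∑ j, |A i j|) * B := fun i =>
    calc |(A *ᵥ v) i| ≤ ∑ j, |A i j| * |v j| :=
          (Finset.abs_sum_le_sum_abs (fun j => A i j * v j) Finset.univ).trans_eq
            (by simp only [abs_mul])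
      _ ≤ (∑ j, |A i j|) * B := by
          rw [Finset.sum_mul]
          exact Finset.sum_le_sum fun j _ => mul_le_mul_of_nonneg_left (hv j) (abs_nonneg _)
  calc |A *ᵥ v ⬝ᵥ v| ≤ ∑ i, |(A *ᵥ v) i| * |v i| :=
        (Finset.abs_sum_le_sum_abs _ _).trans_eq (by simp only [abs_mul])
    _ ≤ ∑ i, (∑ j, |A i j|) * B * B :=
        Finset.sum_le_sum fun i _ => mul_le_mul (hAv i) (hv i) (abs_nonneg _)
          (mul_nonneg (Finset.sum_nonneg fun j _ => abs_nonneg _) ((abs_nonneg _).trans (hv i)))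
    _ = (∑ i, ∑ j, |A i j|) * B ^ 2 := by simp only [Finset.sum_mul, sq, mul_assoc]

section Potential

variable {U : Type*} {N : ℕ} (S : Matrix (Fin N) (Fin N) ℝ) (δ : Fin N → ℝ)

lemma continuous_potential_id : Continuous (potential S δ id) := by
  unfold potential
  simp only [id, mulVec, dotProduct]
  fun_prop

variable {S δ}

lemma measurable_potential [MeasurableSpace U] {G : U → Fin N → ℝ} (hG : Measurable G) :
    Measurable (potential S δ G) :=
  (continuous_potential_id S δ).measurable.comp hG

lemma tendsto_potential {ι : Type*} {l : Filter ι} {G : ι → U → Fin N → ℝ}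
    {G₀ : U → Fin N → ℝ} {z : U} (hG : Tendsto (fun i => G i z) l (𝓝 (G₀ z))) :
    Tendsto (fun i => potential S δ (G i) z) l (𝓝 (potential S δ G₀ z)) :=
  ((continuous_potential_id S δ).tendsto _).comp hG

lemma abs_potential_le {G : U → Fin N → ℝ} {M : ℝ} {z : U} (hG : euclNorm (G z) ≤ M) :
    |potential S δ G z| ≤ 1 / 2 * ((∑ i, ∑ j, |S⁻¹ i j|) * (euclNorm δ + M) ^ 2) := by
  rw [potential, abs_mul, abs_of_pos (by norm_num : (0 : ℝ) < 1 / 2)]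
  refine mul_le_mul_of_nonneg_left (abs_mulVec_dotProduct_le _ fun i => ?_) (by norm_num)
  calc |(δ - G z) i| ≤ |δ i| + |G z i| := abs_sub _ _
    _ ≤ euclNorm δ + M :=
        add_le_add (abs_apply_le_euclNorm δ i) ((abs_apply_le_euclNorm (G z) i).trans hG)

end Potential

section Hellinger

variable {U : Type*} [MeasurableSpace U] {ρ : Measure U}

lemma sq_sqrt_sub_sqrt_le {a b K : ℝ} (hK : 0 ≤ K) (ha : a ≤ K) (hb : b ≤ K) :
    (Real.sqrt a - Real.sqrt b) ^ 2 ≤ K := by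
  have hsa := Real.sqrt_le_sqrt ha
  have hsb := Real.sqrt_le_sqrt hb
  calc (Real.sqrt a - Real.sqrt b) ^ 2 ≤ Real.sqrt K ^ 2 :=
        sq_le_sq' (by linarith [Real.sqrt_nonneg a]) (by linarith [Real.sqrt_nonneg b])
    _ = K := Real.sq_sqrt hK

variable [IsFiniteMeasure ρ]

lemma tendsto_hellingerDist_zero {f g : ℕ → U → ℝ} {h : U → ℝ} {K : ℝ} (hK : 0 ≤ K)
    (hf : ∀ n, AEStronglyMeasurable (f n) ρ) (hg : ∀ n, AEStronglyMeasurable (g n) ρ)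
    (hfK : ∀ n z, f n z ≤ K) (hgK : ∀ n z, g n z ≤ K)
    (hfh : ∀ z, Tendsto (fun n => f n z) atTop (𝓝 (h z)))
    (hgh : ∀ z, Tendsto (fun n => g n z) atTop (𝓝 (h z))) :
    Tendsto (fun n => hellingerDist ρ (f n) (g n)) atTop (𝓝 0) := by
  have hsq : ∀ {F : ℕ → U → ℝ}, (∀ z, Tendsto (fun n => F n z) atTop (𝓝 (h z))) →
      ∀ z, Tendsto (fun n => Real.sqrt (F n z)) atTop (𝓝 (Real.sqrt (h z))) :=
    fun hF z => (Real.continuous_sqrt.tendsto _).comp (hF z)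
  have hint : Tendsto (fun n => ∫ z, (Real.sqrt (f n z) - Real.sqrt (g n z)) ^ 2 ∂ρ) atTop
      (𝓝 (∫ _, (0 : ℝ) ∂ρ)) := by
    refine tendsto_integral_of_dominated_convergence (fun _ => K) (fun n => ?_)
      (integrable_const K) (fun n => .of_forall fun z => ?_) (.of_forall fun z => ?_)
    · exact ((Real.continuous_sqrt.comp_aestronglyMeasurable (hf n)).sub
        (Real.continuous_sqrt.comp_aestronglyMeasurable (hg n))).pow 2
    · rw [Real.norm_of_nonneg (sq_nonneg _)]
      exact sq_sqrt_sub_sqrt_le hK (hfK n z) (hgK n z)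
    · simpa using ((hsq hfh z).sub (hsq hgh z)).pow 2
  have := ((Real.continuous_sqrt.tendsto _).comp (hint.const_mul (1 / 2)))
  simpa only [hellingerDist, Function.comp_def, integral_zero, mul_zero, Real.sqrt_zero] using this

end Hellinger

section Gibbs

variable {U : Type*} [MeasurableSpace U] {ρ : Measure U} {C : ℝ}

lemma integrable_exp_neg [IsFiniteMeasure ρ] {Φ : U → ℝ} (hΦ : AEStronglyMeasurable Φ ρ)
    (hC : ∀ z, |Φ z| ≤ C) : Integrable (fun z => exp (-Φ z)) ρ :=
  (integrable_const (exp C)).mono' (continuous_exp.comp_aestronglyMeasurable hΦ.neg)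
    (.of_forall fun z => by
      rw [norm_of_nonneg (exp_pos _).le]
      exact exp_le_exp.2 (neg_le.1 (abs_le.1 (hC z)).1))

lemma aestronglyMeasurable_gibbsDensity {Φ : U → ℝ} (hΦ : AEStronglyMeasurable Φ ρ) :
    AEStronglyMeasurable (gibbsDensity ρ Φ) ρ :=
  ((continuous_exp.comp continuous_neg).div_const _).comp_aestronglyMeasurable hΦ

variable [IsProbabilityMeasure ρ]

lemma exp_neg_le_integral_exp_neg {Φ : U → ℝ} (hΦ : AEStronglyMeasurable Φ ρ)
    (hC : ∀ z, |Φ z| ≤ C) : exp (-C) ≤ ∫ z, exp (-Φ z) ∂ρ :=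
  calc exp (-C) = ∫ _, exp (-C) ∂ρ := by simp
    _ ≤ ∫ z, exp (-Φ z) ∂ρ := integral_mono (integrable_const _) (integrable_exp_neg hΦ hC)
        fun z => exp_le_exp.2 (neg_le_neg (abs_le.1 (hC z)).2)

lemma gibbsDensity_le {Φ : U → ℝ} (hΦ : AEStronglyMeasurable Φ ρ) (hC : ∀ z, |Φ z| ≤ C)
    (z : U) : gibbsDensity ρ Φ z ≤ exp (2 * C) :=
  calc gibbsDensity ρ Φ z ≤ exp C / exp (-C) :=
        div_le_div₀ (exp_pos C).le (exp_le_exp.2 (neg_le.1 (abs_le.1 (hC z)).1)) (exp_pos _)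
          (exp_neg_le_integral_exp_neg hΦ hC)
    _ = exp (2 * C) := by rw [← exp_sub]; ring_nf

variable {Φ : ℕ → U → ℝ} {Φ₀ : U → ℝ}

lemma tendsto_integral_exp_neg (hΦ : ∀ n, AEStronglyMeasurable (Φ n) ρ)
    (hC : ∀ n z, |Φ n z| ≤ C) (hlim : ∀ z, Tendsto (fun n => Φ n z) atTop (𝓝 (Φ₀ z))) :
    Tendsto (fun n => ∫ z, exp (-Φ n z) ∂ρ) atTop (𝓝 (∫ z, exp (-Φ₀ z) ∂ρ)) :=
  tendsto_integral_of_dominated_convergence (fun _ => exp C)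
    (fun n => continuous_exp.comp_aestronglyMeasurable (hΦ n).neg) (integrable_const _)
    (fun n => .of_forall fun z => by
      rw [norm_of_nonneg (exp_pos _).le]
      exact exp_le_exp.2 (neg_le.1 (abs_le.1 (hC n z)).1))
    (.of_forall fun z => (continuous_exp.tendsto _).comp (hlim z).neg)

lemma tendsto_gibbsDensity (hΦ : ∀ n, AEStronglyMeasurable (Φ n) ρ)
    (hC : ∀ n z, |Φ n z| ≤ C) (hlim : ∀ z, Tendsto (fun n => Φ n z) atTop (𝓝 (Φ₀ z)))
    (z : U) : Tendsto (fun n => gibbsDensity ρ (Φ n) z) atTop (𝓝 (gibbsDensity ρ Φ₀ z)) := by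
  have hZ := tendsto_integral_exp_neg hΦ hC hlim
  have hZ₀ : exp (-C) ≤ ∫ z, exp (-Φ₀ z) ∂ρ :=
    ge_of_tendsto hZ (.of_forall fun n => exp_neg_le_integral_exp_neg (hΦ n) (hC n))
  exact ((continuous_exp.tendsto _).comp (hlim z).neg).div hZ ((exp_pos _).trans_le hZ₀).ne'

lemma tendsto_hellingerDist_gibbsDensity {Ψ : ℕ → U → ℝ}
    (hΦ : ∀ n, AEStronglyMeasurable (Φ n) ρ) (hΨ : ∀ n, AEStronglyMeasurable (Ψ n) ρ)
    (hΦC : ∀ n z, |Φ n z| ≤ C) (hΨC : ∀ n z, |Ψ n z| ≤ C)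
    (hΦlim : ∀ z, Tendsto (fun n => Φ n z) atTop (𝓝 (Φ₀ z)))
    (hΨlim : ∀ z, Tendsto (fun n => Ψ n z) atTop (𝓝 (Φ₀ z))) :
    Tendsto (fun n => hellingerDist ρ (gibbsDensity ρ (Φ n)) (gibbsDensity ρ (Ψ n))) atTop
      (𝓝 0) :=
  tendsto_hellingerDist_zero (exp_pos _).le
    (fun n => aestronglyMeasurable_gibbsDensity (hΦ n))
    (fun n => aestronglyMeasurable_gibbsDensity (hΨ n))
    (fun n => gibbsDensity_le (hΦ n) (hΦC n)) (fun n => gibbsDensity_le (hΨ n) (hΨC n))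
    (tendsto_gibbsDensity hΦ hΦC hΦlim) (tendsto_gibbsDensity hΨ hΨC hΨlim)

end Gibbs

theorem hellinger_convergence_FE_approximation_general
    {U : Type*} [MeasurableSpace U] (ρ : Measure U) [IsProbabilityMeasure ρ]
    {N : ℕ} (S : Matrix (Fin N) (Fin N) ℝ) (δ : Fin N → ℝ)
    (M : ℝ)
    (Gep : ℝ → U → Fin N → ℝ) (Gfe : ℕ → U → Fin N → ℝ) (G0 : U → Fin N → ℝ)
    (hGepmeas : ∀ ε ∈ Set.Ioc (0 : ℝ) 1, Measurable (Gep ε))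
    (hGfemeas : ∀ L, Measurable (Gfe L))
    (hGepbdd : ∀ ε ∈ Set.Ioc (0 : ℝ) 1, ∀ z, euclNorm (Gep ε z) ≤ M)
    (hGfebdd : ∀ L, ∀ z, euclNorm (Gfe L z) ≤ M)
    (hGepconv : ∀ z, Tendsto (fun ε => Gep ε z)
        (nhdsWithin 0 (Set.Ioc (0 : ℝ) 1)) (nhds (G0 z)))
    (hGfeconv : ∀ z, Tendsto (fun L => Gfe L z) atTop (nhds (G0 z))) :
    ∀ (εseq : ℕ → ℝ) (Lseq : ℕ → ℕ),
      (∀ n, εseq n ∈ Set.Ioc (0 : ℝ) 1) → Tendsto εseq atTop (nhds 0) →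
      Tendsto Lseq atTop atTop →
      Tendsto (fun n => hellingerDist ρ
          (gibbsDensity ρ (potential S δ (Gep (εseq n))))
          (gibbsDensity ρ (potential S δ (Gfe (Lseq n))))) atTop (nhds 0) := by
  intro εseq Lseq hεmem hεconv hLconv
  have hε : Tendsto εseq atTop (𝓝[Set.Ioc 0 1] 0) :=
    tendsto_nhdsWithin_iff.2 ⟨hεconv, .of_forall hεmem⟩
  exact tendsto_hellingerDist_gibbsDensity (Φ₀ := potential S δ G0)
    (fun n => (measurable_potential (hGepmeas _ (hεmem n))).aestronglyMeasurable)
    (fun n => (measurable_potential (hGfemeas _)).aestronglyMeasurable)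
    (fun n z => abs_potential_le (hGepbdd _ (hεmem n) z))
    (fun n z => abs_potential_le (hGfebdd _ z))
    (fun z => tendsto_potential ((hGepconv z).comp hε))
    (fun z => tendsto_potential ((hGfeconv z).comp hLconv))

/-- Joint Hellinger convergence of the two-scale posterior and its finite
element approximation: if `G_ε → G_0` as `ε → 0` and `G^L → G_0` as `L → ∞`,
all uniformly bounded, then for any sequences `ε_n → 0`, `L_n → ∞` the
Hellinger distance between the corresponding Gibbs posteriors tends to `0`. -/
theorem hellinger_convergence_FE_approximation
    {U : Type*} [MeasurableSpace U] (ρ : Measure U) [IsProbabilityMeasure ρ]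
    {N : ℕ} (S : Matrix (Fin N) (Fin N) ℝ) (hS : S.PosDef) (δ : Fin N → ℝ)
    (M : ℝ) (hM : 0 < M)
    (Gep : ℝ → U → Fin N → ℝ) (Gfe : ℕ → U → Fin N → ℝ) (G0 : U → Fin N → ℝ)
    (hGepmeas : ∀ ε ∈ Set.Ioc (0 : ℝ) 1, Measurable (Gep ε))
    (hGfemeas : ∀ L, Measurable (Gfe L)) (hG0meas : Measurable G0)
    (hGepbdd : ∀ ε ∈ Set.Ioc (0 : ℝ) 1, ∀ z, euclNorm (Gep ε z) ≤ M)
    (hGfebdd : ∀ L, ∀ z, euclNorm (Gfe L z) ≤ M)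
    (hG0bdd : ∀ z, euclNorm (G0 z) ≤ M)
    (hGepconv : ∀ z, Tendsto (fun ε => Gep ε z)
        (nhdsWithin 0 (Set.Ioc (0 : ℝ) 1)) (nhds (G0 z)))
    (hGfeconv : ∀ z, Tendsto (fun L => Gfe L z) atTop (nhds (G0 z))) :
    ∀ (εseq : ℕ → ℝ) (Lseq : ℕ → ℕ),
      (∀ n, εseq n ∈ Set.Ioc (0 : ℝ) 1) → Tendsto εseq atTop (nhds 0) →
      Tendsto Lseq atTop atTop →
      Tendsto (fun n => hellingerDist ρ
          (gibbsDensity ρ (potential S δ (Gep (εseq n))))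
          (gibbsDensity ρ (potential S δ (Gfe (Lseq n))))) atTop (nhds 0) :=
  hellinger_convergence_FE_approximation_general ρ S δ M Gep Gfe G0 hGepmeas hGfemeas hGepbdd
    hGfebdd hGepconv hGfeconv
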